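/- Under the same hypotheses (ρA(θ)ρ = -A(-θ), exp(Ā) = Φ(1), Ā ∈ Ω with exp injective on Ω, -Ω ⊆ Ω, ρΩρ ⊆ Ω), the averaging map v(u,τ) = exp(Āτ)Φ(τ)⁻¹u satisfies v(ρu, -τ) = ρ v(u, τ) for all u ∈ ℝⁿ and τ ∈ ℝ; i.e., the averaging change of variables commutes with the reversibility map R(u,τ) = (ρu, -τ). -/

import Mathlib

open Matrix NormedSpace

attribute [local instance] Matrix.normedAddCommGroup Matrix.normedSpace

/-!
Reversibility makes `τ ↦ ρ Φ(-τ) ρ` a solution of the same linear equation as `Φ`, with the same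
initial value, so `ρ Φ(-τ) ρ = Φ(τ)`. Together with the Floquet relation `Φ(τ + 1) = Φ(τ) Φ(1)`
this gives `ρ Φ(1) ρ = Φ(-1) = Φ(1)⁻¹`, i.e. `exp (ρ Ā ρ) = exp (-Ā)`. Both logarithms lie in `Ω`,
where `exp` is injective, so `ρ Ā ρ = -Ā`; conjugating `exp (τ Ā) Φ(τ)⁻¹` by `ρ` then gives the claim.
-/

theorem eq_of_hasDerivAt_clm_apply {E : Type*} [NormedAddCommGroup E] [NormedSpace ℝ E]
    {L : ℝ → E →L[ℝ] E} (hL : Continuous L) {f g : ℝ → E}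
    (hf : ∀ t, HasDerivAt f (L t (f t)) t) (hg : ∀ t, HasDerivAt g (L t (g t)) t)
    {t₀ : ℝ} (h : f t₀ = g t₀) : f = g := by
  funext t
  obtain ⟨a, b, hta, ht₀⟩ : ∃ a b, t ∈ Set.Ioo a b ∧ t₀ ∈ Set.Ioo a b :=
    ⟨min (-|t|) (-|t₀|) - 1, max |t| |t₀| + 1, by grind⟩
  obtain ⟨C, hC⟩ := (isCompact_Icc (a := a) (b := b)).exists_bound_of_continuousOn hL.continuousOn
  have hlip : ∀ s ∈ Set.Ioo a b, LipschitzOnWith C.toNNReal (L s) Set.univ := fun s hs =>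
    have hCs := hC s (Set.Ioo_subset_Icc_self hs)
    ((L s).lipschitz.weaken <|
      (Real.le_toNNReal_iff_coe_le ((norm_nonneg _).trans hCs)).2 hCs).lipschitzOnWith
  exact ODE_solution_unique_of_mem_Ioo hlip ht₀ (fun s _ => ⟨hf s, trivial⟩)
    (fun s _ => ⟨hg s, trivial⟩) h hta

section Matrix

-- The sup norm on matrices is not submultiplicative, so the `NormedRing` lemmas such as
-- `HasDerivAt.const_mul` do not apply; left and right multiplication are used as linear maps.
variable {m : Type*} [Fintype m]

theorem HasDerivAt.matrix_const_mul {F : ℝ → Matrix m m ℝ} {F' : Matrix m m ℝ} {t : ℝ}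
    (c : Matrix m m ℝ) (h : HasDerivAt F F' t) : HasDerivAt (fun s => c * F s) (c * F') t :=
  (LinearMap.mulLeft ℝ c).toContinuousLinearMap.hasFDerivAt.comp_hasDerivAt t h

theorem HasDerivAt.matrix_mul_const {F : ℝ → Matrix m m ℝ} {F' : Matrix m m ℝ} {t : ℝ}
    (c : Matrix m m ℝ) (h : HasDerivAt F F' t) : HasDerivAt (fun s => F s * c) (F' * c) t :=
  (LinearMap.mulRight ℝ c).toContinuousLinearMap.hasFDerivAt.comp_hasDerivAt t h

theorem eq_of_hasDerivAt_matrix_mul {A : ℝ → Matrix m m ℝ} (hA : Continuous A)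
    {F G : ℝ → Matrix m m ℝ} (hF : ∀ t, HasDerivAt F (A t * F t) t)
    (hG : ∀ t, HasDerivAt G (A t * G t) t) {t₀ : ℝ} (h : F t₀ = G t₀) : F = G := by
  let mulLeftCLM : Matrix m m ℝ →ₗ[ℝ] Matrix m m ℝ →L[ℝ] Matrix m m ℝ :=
    LinearMap.toContinuousLinearMap.toLinearMap ∘ₗ LinearMap.mul ℝ (Matrix m m ℝ)
  exact eq_of_hasDerivAt_clm_apply (L := fun t => mulLeftCLM (A t))
    (mulLeftCLM.continuous_of_finiteDimensional.comp hA) hF hG h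

end Matrix

section Fundamental

variable {m : Type*} [Fintype m] [DecidableEq m] {A Φ : ℝ → Matrix m m ℝ}

theorem fundamental_add_period (hA : Continuous A) {T : ℝ} (hper : ∀ t, A (t + T) = A t)
    (hΦ : ∀ t, HasDerivAt Φ (A t * Φ t) t) (hΦ0 : Φ 0 = 1) (t : ℝ) :
    Φ (t + T) = Φ t * Φ T := by
  have hshift : ∀ t, HasDerivAt (fun s => Φ (s + T)) (A t * Φ (t + T)) t := fun t =>
    ((hΦ (t + T)).comp_add_const t T).congr_deriv (by rw [hper])
  have hmul : ∀ t, HasDerivAt (fun s => Φ s * Φ T) (A t * (Φ t * Φ T)) t := fun t =>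
    ((hΦ t).matrix_mul_const (Φ T)).congr_deriv (mul_assoc _ _ _)
  exact congrFun (eq_of_hasDerivAt_matrix_mul hA hshift hmul (t₀ := 0) (by simp [hΦ0])) t

theorem conj_fundamental_neg (hA : Continuous A) {ρ : Matrix m m ℝ} (hρ : ρ * ρ = 1)
    (hrev : ∀ θ, ρ * A θ * ρ = -A (-θ)) (hΦ : ∀ t, HasDerivAt Φ (A t * Φ t) t)
    (hΦ0 : Φ 0 = 1) (t : ℝ) : ρ * Φ (-t) * ρ = Φ t := by
  have hconj : ∀ t, HasDerivAt (fun s => ρ * Φ (-s) * ρ) (A t * (ρ * Φ (-t) * ρ)) t := by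
    intro t
    have hA_neg : A t = -(ρ * A (-t) * ρ) := by rw [hrev, neg_neg, neg_neg]
    have hd := (((hΦ (-t)).scomp t (hasDerivAt_neg t)).matrix_const_mul ρ).matrix_mul_const ρ
    refine hd.congr_deriv ?_
    rw [hA_neg]
    simp only [neg_one_smul, Matrix.mul_neg, Matrix.neg_mul, mul_assoc, ← mul_assoc ρ ρ, hρ,
      one_mul]
  exact congrFun (eq_of_hasDerivAt_matrix_mul hA hconj hΦ (t₀ := 0) (by simp [hΦ0, hρ])) t

end Fundamental

section Involution

variable {m : Type*} [Fintype m] [DecidableEq m] {ρ : Matrix m m ℝ}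

theorem exp_conj_of_mul_self_eq_one (hρ : ρ * ρ = 1) (X : Matrix m m ℝ) :
    exp (ρ * X * ρ) = ρ * exp X * ρ :=
  Matrix.exp_units_conj ⟨ρ, ρ, hρ, hρ⟩ X

theorem inv_conj_of_mul_self_eq_one (hρ : ρ * ρ = 1) (X : Matrix m m ℝ) :
    (ρ * X * ρ)⁻¹ = ρ * X⁻¹ * ρ := by
  rw [Matrix.mul_inv_rev, Matrix.mul_inv_rev, Matrix.inv_eq_left_inv hρ, mul_assoc]

theorem conj_eq_neg_of_conj_exp_eq_inv {Ω : Set (Matrix m m ℝ)} (hinj : Set.InjOn exp Ω)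
    (hneg : ∀ X ∈ Ω, -X ∈ Ω) (hconj : ∀ X ∈ Ω, ρ * X * ρ ∈ Ω) (hρ : ρ * ρ = 1)
    {X : Matrix m m ℝ} (hX : X ∈ Ω) (h : ρ * exp X * ρ = (exp X)⁻¹) : ρ * X * ρ = -X :=
  hinj (hconj X hX) (hneg X hX) <| by rw [exp_conj_of_mul_self_eq_one hρ, h, Matrix.exp_neg]

end Involution

/-- Under the reversibility hypotheses, the averaging change of variables
`v(u,τ) = exp(Ā τ) Φ(τ)⁻¹ u` commutes with the reversibility map
`R(u,τ) = (ρ u, -τ)`, i.e. `v(ρ u, -τ) = ρ v(u, τ)`. -/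
theorem stmt_6 (n : ℕ)
    (A : ℝ → Matrix (Fin n) (Fin n) ℝ)
    (hA : Continuous A)
    (hAper : ∀ τ, A (τ + 1) = A τ)
    (ρ : Matrix (Fin n) (Fin n) ℝ)
    (hρ : ρ * ρ = 1)
    (hrev : ∀ θ : ℝ, ρ * A θ * ρ = -A (-θ))
    (Φ : ℝ → Matrix (Fin n) (Fin n) ℝ)
    (hΦ : ∀ τ, HasDerivAt Φ (A τ * Φ τ) τ)
    (hΦ0 : Φ 0 = 1)
    (Ω : Set (Matrix (Fin n) (Fin n) ℝ))
    (hinj : Set.InjOn (exp) Ω)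
    (hneg : ∀ X ∈ Ω, -X ∈ Ω)
    (hconj : ∀ X ∈ Ω, ρ * X * ρ ∈ Ω)
    (Abar : Matrix (Fin n) (Fin n) ℝ)
    (hmem : Abar ∈ Ω)
    (hAbar : exp Abar = Φ 1)
    (v : (Fin n → ℝ) → ℝ → Fin n → ℝ)
    (hv : ∀ (u : Fin n → ℝ) (τ : ℝ),
      v u τ = (exp (τ • Abar) * (Φ τ)⁻¹) *ᵥ u) :
    ∀ (u : Fin n → ℝ) (τ : ℝ), v (ρ *ᵥ u) (-τ) = ρ *ᵥ v u τ := by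
  have hsym (τ : ℝ) : ρ * Φ τ * ρ = Φ (-τ) := by
    simpa only [neg_neg] using conj_fundamental_neg hA hρ hrev hΦ hΦ0 (-τ)
  have hmonodromy : ρ * exp Abar * ρ = (exp Abar)⁻¹ := by
    have hΦ_neg_one : Φ (-1) * Φ 1 = 1 := by
      simpa only [neg_add_cancel, hΦ0, eq_comm] using fundamental_add_period hA hAper hΦ hΦ0 (-1)
    rw [hAbar, hsym, Matrix.inv_eq_left_inv hΦ_neg_one]
  have hlog : ρ * Abar * ρ = -Abar :=
    conj_eq_neg_of_conj_exp_eq_inv hinj hneg hconj hρ hmem hmonodromy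
  have hexp (τ : ℝ) : exp ((-τ) • Abar) = ρ * exp (τ • Abar) * ρ := by
    rw [← exp_conj_of_mul_self_eq_one hρ, Matrix.mul_smul, Matrix.smul_mul, hlog, smul_neg,
      neg_smul]
  intro u τ
  rw [hv, hv, Matrix.mulVec_mulVec, Matrix.mulVec_mulVec, hexp, ← hsym,
    inv_conj_of_mul_self_eq_one hρ]
  simp only [mul_assoc, ← mul_assoc ρ ρ, hρ, one_mul, mul_one]
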